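/- Let H be a real vector space, A : H → ℝⁿ a linear map, and Q a symmetric bilinear form on H. For every subspace V ⊆ H, the set ℒ(V) = {(ξ, A v) : ξ ∈ (ℝⁿ)*, v ∈ V, and ξ(A w) + Q(v, w) = 0 for all w ∈ V} is an isotropic subspace of Σ = (ℝⁿ)* × ℝⁿ with the symplectic form σ((ξ, x), (η, y)) = ξ(y) − η(x); if moreover V is finite-dimensional, then ℒ(V) is a Lagrangian subspace of Σ (i.e. isotropic of dimension n). -/

import Mathlib

/-!
Isotropy is the symmetry of `Q`: `σ((ξ, A v), (η, A u)) = -Q v u + Q u v = 0`.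

For the dimension, restrict everything to `V` and write `ℒ(V)` as the image of `ker T`, where
`T (ξ, v) = A* ξ + Q v` maps `(ℝⁿ)* × V → V*`, under `(ξ, v) ↦ (ξ, A v)`. Because `Q` is
symmetric, the annihilator of `range T = (ker A)⁰ + range Q` is `K = ker A ∩ ker Q`, so
`dim ker T = n + dim V - (dim V - dim K) = n + dim K`; the projection loses exactly `0 × K`,
which leaves `dim ℒ(V) = n`.
-/

open Module Submodule

/-- The standard symplectic form `σ((ξ, x), (η, y)) = ξ y - η x` on `(ℝⁿ)* × ℝⁿ`. -/
noncomputable def dualSymp (n : ℕ) :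
    (Module.Dual ℝ (Fin n → ℝ) × (Fin n → ℝ)) →ₗ[ℝ]
      (Module.Dual ℝ (Fin n → ℝ) × (Fin n → ℝ)) →ₗ[ℝ] ℝ :=
  LinearMap.mk₂ ℝ (fun p q => p.1 q.2 - q.1 p.2)
    (fun p p' q => by
      simp only [Prod.fst_add, Prod.snd_add, map_add, LinearMap.add_apply]; ring)
    (fun c p q => by
      simp only [Prod.smul_fst, Prod.smul_snd, map_smul, LinearMap.smul_apply,
        smul_eq_mul]; ring)
    (fun p q q' => by
      simp only [Prod.fst_add, Prod.snd_add, map_add, LinearMap.add_apply]; ring)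
    (fun c p q => by
      simp only [Prod.smul_fst, Prod.smul_snd, map_smul, LinearMap.smul_apply,
        smul_eq_mul]; ring)

/-- The L-derivative over a space of variations `V`: all pairs `(ξ, A v)` with `v ∈ V`
such that `ξ (A w) + Q v w = 0` for all `w ∈ V`. -/
noncomputable def Lderiv {H : Type*} [AddCommGroup H] [Module ℝ H] {n : ℕ}
    (A : H →ₗ[ℝ] (Fin n → ℝ)) (Q : H →ₗ[ℝ] H →ₗ[ℝ] ℝ) (V : Submodule ℝ H) :
    Submodule ℝ (Module.Dual ℝ (Fin n → ℝ) × (Fin n → ℝ)) where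
  carrier := {p | ∃ v ∈ V, A v = p.2 ∧ ∀ w ∈ V, p.1 (A w) + Q v w = 0}
  zero_mem' := ⟨0, V.zero_mem, by simp, by intro w hw; simp⟩
  add_mem' := by
    rintro p q ⟨v, hv, hAv, hev⟩ ⟨u, hu, hAu, heu⟩
    refine ⟨v + u, V.add_mem hv hu, ?_, ?_⟩
    · simp only [map_add, hAv, hAu, Prod.snd_add]
    · intro w hw
      have h1 := hev w hw
      have h2 := heu w hw
      simp only [Prod.fst_add, LinearMap.add_apply, map_add]
      linarith
  smul_mem' := by
    rintro c p ⟨v, hv, hAv, hev⟩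
    refine ⟨c • v, V.smul_mem c hv, ?_, ?_⟩
    · simp only [map_smul, hAv, Prod.smul_snd]
    · intro w hw
      have h1 := hev w hw
      simp only [Prod.smul_fst, LinearMap.smul_apply, map_smul, smul_eq_mul]
      rw [← mul_add, h1, mul_zero]


open LinearMap

section

variable {K V W : Type*} [Field K] [AddCommGroup V] [Module K V] [AddCommGroup W] [Module K W]

theorem Submodule.finrank_map_add_finrank_inf_ker (f : V →ₗ[K] W) (p : Submodule K V)
    [FiniteDimensional K p] :
    finrank K (p.map f) + finrank K ↥(p ⊓ ker f) = finrank K p := by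
  have hker : finrank K (ker (f.domRestrict p)) = finrank K ↥(p ⊓ ker f) := by
    rw [ker_domRestrict, ← finrank_map_subtype_eq, map_comap_subtype]
  rw [← range_domRestrict, ← hker]
  exact finrank_range_add_finrank_ker _

theorem finrank_range_dualMap_coprod_add_finrank_ker_inf_ker [FiniteDimensional K V]
    (f : V →ₗ[K] W) {B : LinearMap.BilinForm K V} (hB : B.IsSymm) :
    finrank K (range (f.dualMap.coprod B)) + finrank K ↥(ker f ⊓ ker B) = finrank K V := by
  have hflip : LinearMap.flip B = B := BilinForm.isSymm_iff_flip.mp hB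
  have hcoann : (range (f.dualMap.coprod B)).dualCoannihilator = ker f ⊓ ker B := by
    rw [range_coprod, range_dualMap_eq_dualAnnihilator_ker, dualCoannihilator_sup_eq,
      Subspace.dualAnnihilator_dualCoannihilator_eq, dualCoannihilator_range_eq_ker_flip,
      hflip]
  rw [← hcoann]
  exact Subspace.finrank_add_finrank_dualCoannihilator_eq _

noncomputable def lagrangianOf (f : V →ₗ[K] W) (B : LinearMap.BilinForm K V) :
    Submodule K (Dual K W × W) :=
  (ker (f.dualMap.coprod B)).map (prodMap id f)

theorem mem_ker_dualMap_coprod (f : V →ₗ[K] W) (B : LinearMap.BilinForm K V) (ξ : Dual K W)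
    (v : V) : (ξ, v) ∈ ker (f.dualMap.coprod B) ↔ ∀ w, ξ (f w) + B v w = 0 := by
  simp [LinearMap.ext_iff]

theorem ker_dualMap_coprod_inf_ker_prodMap (f : V →ₗ[K] W) (B : LinearMap.BilinForm K V) :
    ker (f.dualMap.coprod B) ⊓ ker (prodMap id f) =
      (ker f ⊓ ker B).map (inr K (Dual K W) V) := by
  ext ⟨ξ, v⟩
  simp only [mem_inf, mem_ker, coprod_apply, prodMap_apply, id_apply, Prod.mk_eq_zero, mem_map,
    coe_inr, Prod.mk.injEq]
  constructor
  · rintro ⟨hT, rfl, hv⟩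
    exact ⟨v, ⟨hv, by simpa using hT⟩, rfl, rfl⟩
  · rintro ⟨v, ⟨hv, hBv⟩, rfl, rfl⟩
    simp [hv, hBv]

theorem finrank_lagrangianOf [FiniteDimensional K V] [FiniteDimensional K W]
    (f : V →ₗ[K] W) {B : LinearMap.BilinForm K V} (hB : B.IsSymm) :
    finrank K (lagrangianOf f B) = finrank K W := by
  have hrank := finrank_range_dualMap_coprod_add_finrank_ker_inf_ker f hB
  have hnullity := finrank_range_add_finrank_ker (f.dualMap.coprod B)
  have hmap := (ker (f.dualMap.coprod B)).finrank_map_add_finrank_inf_ker (prodMap id f)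
  rw [ker_dualMap_coprod_inf_ker_prodMap,
    (equivMapOfInjective _ inr_injective _).finrank_eq.symm] at hmap
  rw [finrank_prod, Subspace.dual_finrank_eq] at hnullity
  rw [lagrangianOf]
  omega

end

section

variable {H : Type*} [AddCommGroup H] [Module ℝ H] {n : ℕ} (A : H →ₗ[ℝ] (Fin n → ℝ))
  (Q : H →ₗ[ℝ] H →ₗ[ℝ] ℝ)

theorem dualSymp_eq_zero_of_mem_Lderiv (hQ : ∀ x y : H, Q x y = Q y x) {V : Submodule ℝ H}
    {p q} (hp : p ∈ Lderiv A Q V) (hq : q ∈ Lderiv A Q V) : dualSymp n p q = 0 := by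
  obtain ⟨v, hv, hAv, hξ⟩ := hp
  obtain ⟨u, hu, hAu, hη⟩ := hq
  have hξu := hξ u hu
  have hηv := hη v hv
  simp only [dualSymp, LinearMap.mk₂_apply, ← hAv, ← hAu]
  linarith [hQ u v]

theorem Lderiv_eq_lagrangianOf (V : Submodule ℝ H) :
    Lderiv A Q V = lagrangianOf (A ∘ₗ V.subtype) (BilinForm.restrict Q V) := by
  ext ⟨ξ, x⟩
  simp only [lagrangianOf, mem_map, Prod.exists, mem_ker_dualMap_coprod, prodMap_apply, id_apply,
    Prod.mk.injEq]
  constructor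
  · rintro ⟨v, hv, rfl, h⟩
    exact ⟨ξ, ⟨v, hv⟩, fun w => h w w.2, rfl, rfl⟩
  · rintro ⟨η, v, h, rfl, rfl⟩
    exact ⟨v, v.2, rfl, fun w hw => h ⟨w, hw⟩⟩

end

theorem stmt_15 {H : Type*} [AddCommGroup H] [Module ℝ H] {n : ℕ}
    (A : H →ₗ[ℝ] (Fin n → ℝ)) (Q : H →ₗ[ℝ] H →ₗ[ℝ] ℝ)
    (hQ : ∀ x y : H, Q x y = Q y x) (V : Submodule ℝ H) :
    (∀ p ∈ Lderiv A Q V, ∀ q ∈ Lderiv A Q V, dualSymp n p q = 0) ∧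
    (FiniteDimensional ℝ ↥V → Module.finrank ℝ ↥(Lderiv A Q V) = n) := by
  refine ⟨fun p hp q hq => dualSymp_eq_zero_of_mem_Lderiv A Q hQ hp hq, fun _ => ?_⟩
  rw [Lderiv_eq_lagrangianOf, finrank_lagrangianOf _ ((BilinForm.isSymm_def.mpr hQ).restrict V),
    finrank_fin_fun]
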